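/- arXiv:1712.03173 — 4 statements merged into one kernel-verified Lean document; each statement's English description precedes it below -/
import Mathlib

section
/- Let q be a prime and let a be an element of (ℤ/qℤ)^×. Then |Kl₂(a;q)| ≤ 2 q^{1/4}; equivalently, the unnormalized Kloosterman sum satisfies |∑_{x ∈ (ℤ/qℤ)^×} e((x + a x^{-1})/q)| ≤ 2 q^{3/4}. -/
/-!
The Kloosterman sum `K(m, n) = ∑_{x ∈ Fˣ} ψ(m x + n x⁻¹)` is the Fourier transform on `F × F` of the
hyperbola `H = {(x, x⁻¹)}`, so by orthogonality its fourth moment `∑_{m,n} |K(m, n)|⁴` is `|F|²`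
times the additive energy of `H`. In a field, `x₁ + x₂ = x₃ + x₄` and `x₁⁻¹ + x₂⁻¹ = x₃⁻¹ + x₄⁻¹`
force `{x₃, x₄} = {x₁, x₂}` or `x₂ = -x₁, x₄ = -x₃`, so this energy is at most `3 |Fˣ|²`. Since
`K(u, u⁻¹ a) = K(1, a)` for every unit `u`, the single value `|K(1, a)|⁴` occurs `|Fˣ|` times in
the moment, whence `|K(1, a)|⁴ ≤ 3 |F|³`.
-/

open Finset
open scoped Combinatorics.Additive

/-- The normalized Kloosterman sum `Kl₂(a; c) = c^{-1/2} ∑_{x ∈ (ℤ/cℤ)ˣ} e((x + a x⁻¹)/c)`,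
where `e(t) = exp(2πit)` and an element of `ℤ/cℤ` is identified with its representative
in `{0, …, c-1}` via `ZMod.val`. -/
noncomputable def Kl2 (c : ℕ) (a : ZMod c) : ℂ :=
  (Real.sqrt c : ℂ)⁻¹ * ∑ x ∈ Finset.range c,
    if Nat.Coprime x c then
      Complex.exp (2 * (Real.pi : ℂ) * Complex.I *
        ((((x : ZMod c) + a * (x : ZMod c)⁻¹).val : ℂ) / (c : ℂ)))
    else 0

section FourthMoment

variable {G ι : Type*} [AddCommGroup G] [Finite G]

lemma sq_norm_sum_addChar_eq_sum_sub (χ : AddChar G ℂ) (s : Finset G) :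
    ((‖∑ x ∈ s, χ x‖ ^ 2 : ℝ) : ℂ) = ∑ x ∈ s ×ˢ s, χ (x.1 - x.2) := by
  rw [Complex.ofReal_pow, ← Complex.mul_conj', map_sum, sum_mul_sum, sum_product]
  simp only [sub_eq_add_neg, AddChar.map_add_eq_mul, AddChar.map_neg_eq_conj]

theorem sum_norm_sum_addChar_pow_four_eq_mul_addEnergy [DecidableEq G] [Fintype ι]
    (χ : ι → AddChar G ℂ) (N : ℕ) (hχ : ∀ g, ∑ i, χ i g = if g = 0 then (N : ℂ) else 0)
    (s : Finset G) :
    ∑ i, ‖∑ x ∈ s, χ i x‖ ^ 4 = N * E[s] := by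
  apply Complex.ofReal_injective
  calc ((∑ i, ‖∑ x ∈ s, χ i x‖ ^ 4 : ℝ) : ℂ)
      = ∑ i, ∑ x ∈ (s ×ˢ s) ×ˢ (s ×ˢ s), χ i ((x.1.1 - x.1.2) + (x.2.1 - x.2.2)) := by
        push_cast
        refine sum_congr rfl fun i _ => ?_
        rw [show 4 = 2 * 2 from rfl, pow_mul, ← Complex.ofReal_pow,
          sq_norm_sum_addChar_eq_sum_sub, sq, sum_mul_sum, ← sum_product']
        simp only [AddChar.map_add_eq_mul]
    _ = ∑ x ∈ (s ×ˢ s) ×ˢ (s ×ˢ s), if x.1.1 + x.2.1 = x.1.2 + x.2.2 then (N : ℂ) else 0 := by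
        rw [sum_comm]
        simp only [hχ, sub_add_sub_comm, sub_eq_zero]
    _ = ((N * E[s] : ℝ) : ℂ) := by
        rw [sum_ite, sum_const_zero, add_zero, sum_const, nsmul_eq_mul, Finset.addEnergy]
        push_cast; ring

end FourthMoment

section Kloosterman

variable {R : Type*} [CommRing R]

def dotChar (ψ : AddChar R ℂ) (c : R × R) : AddChar (R × R) ℂ :=
  ψ.compAddMonoidHom ((AddMonoidHom.mulLeft c.1).comp (AddMonoidHom.fst R R) +
    (AddMonoidHom.mulLeft c.2).comp (AddMonoidHom.snd R R))

lemma dotChar_apply (ψ : AddChar R ℂ) (c p : R × R) :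
    dotChar ψ c p = ψ (c.1 * p.1 + c.2 * p.2) := rfl

variable [Fintype R] [DecidableEq R]

noncomputable def kloostermanSum (ψ : AddChar R ℂ) (m n : R) : ℂ :=
  ∑ x : Rˣ, ψ (m * x + n * ↑x⁻¹)

lemma kloostermanSum_units_mul (ψ : AddChar R ℂ) (u : Rˣ) (m n : R) :
    kloostermanSum ψ (u * m) (↑u⁻¹ * n) = kloostermanSum ψ m n := by
  refine Fintype.sum_equiv (Equiv.mulLeft u) _ _ fun x => ?_
  simp only [Equiv.coe_mulLeft, mul_inv_rev, Units.val_mul]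
  ring_nf

def hyperbola (R : Type*) [CommRing R] [Fintype R] [DecidableEq R] : Finset (R × R) :=
  univ.map ⟨fun u : Rˣ => ((u : R), ((u⁻¹ : Rˣ) : R)),
    fun _ _ h => Units.ext (congrArg Prod.fst h)⟩

lemma kloostermanSum_eq_sum_hyperbola (ψ : AddChar R ℂ) (m n : R) :
    kloostermanSum ψ m n = ∑ p ∈ hyperbola R, dotChar ψ (m, n) p := by
  rw [hyperbola, sum_map]
  rfl

lemma card_hyperbola : #(hyperbola R) = Fintype.card Rˣ := by
  simp [hyperbola]

lemma sum_dotChar {ψ : AddChar R ℂ} (hψ : ψ.IsPrimitive) (p : R × R) :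
    ∑ c, dotChar ψ c p = if p = 0 then ((Fintype.card R ^ 2 : ℕ) : ℂ) else 0 := by
  simp only [Fintype.sum_prod_type, dotChar_apply, AddChar.map_add_eq_mul, ← mul_sum, ← sum_mul,
    AddChar.sum_mulShift _ hψ, Prod.ext_iff, Prod.fst_zero, Prod.snd_zero]
  split_ifs <;> simp_all [sq]

theorem sum_norm_kloostermanSum_pow_four {ψ : AddChar R ℂ} (hψ : ψ.IsPrimitive) :
    ∑ c : R × R, ‖kloostermanSum ψ c.1 c.2‖ ^ 4 = Fintype.card R ^ 2 * E[hyperbola R] := by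
  simp only [kloostermanSum_eq_sum_hyperbola]
  exact_mod_cast sum_norm_sum_addChar_pow_four_eq_mul_addEnergy (dotChar ψ) _ (sum_dotChar hψ) _

lemma card_units_mul_norm_kloostermanSum_pow_four_le (ψ : AddChar R ℂ) (a : R) :
    Fintype.card Rˣ * ‖kloostermanSum ψ 1 a‖ ^ 4 ≤ ∑ c : R × R, ‖kloostermanSum ψ c.1 c.2‖ ^ 4 := by
  let e : Rˣ ↪ R × R := ⟨fun u => (u, ↑u⁻¹ * a), fun _ _ h => Units.ext (congrArg Prod.fst h)⟩
  have he (u : Rˣ) : kloostermanSum ψ (e u).1 (e u).2 = kloostermanSum ψ 1 a := by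
    rw [← kloostermanSum_units_mul ψ u 1 a, mul_one]
    rfl
  calc Fintype.card Rˣ * ‖kloostermanSum ψ 1 a‖ ^ 4
      = ∑ u : Rˣ, ‖kloostermanSum ψ (e u).1 (e u).2‖ ^ 4 := by simp [he]
    _ = ∑ c ∈ univ.map e, ‖kloostermanSum ψ c.1 c.2‖ ^ 4 :=
        (sum_map univ e fun c => ‖kloostermanSum ψ c.1 c.2‖ ^ 4).symm
    _ ≤ _ := sum_le_univ_sum_of_nonneg fun _ => by positivity

end Kloosterman

section Field

variable {F : Type*} [Field F]

-- `x₁⁻¹ + x₂⁻¹ = (x₁ + x₂) / (x₁ x₂)`, so unless `x₁ + x₂ = 0` the pairs share sum and product.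
lemma eq_and_eq_or_eq_and_eq_or_eq_neg_and_eq_neg {x₁ x₂ x₃ x₄ : F} (h₁ : x₁ ≠ 0) (h₂ : x₂ ≠ 0)
    (h₃ : x₃ ≠ 0) (h₄ : x₄ ≠ 0) (hs : x₁ + x₂ = x₃ + x₄) (hi : x₁⁻¹ + x₂⁻¹ = x₃⁻¹ + x₄⁻¹) :
    x₃ = x₁ ∧ x₄ = x₂ ∨ x₃ = x₂ ∧ x₄ = x₁ ∨ x₂ = -x₁ ∧ x₄ = -x₃ := by
  have hsp : (x₁ + x₂) * (x₃ * x₄) = (x₁ + x₂) * (x₁ * x₂) := by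
    field_simp at hi
    linear_combination hi - (x₁ * x₂) * hs
  by_cases hs₀ : x₁ + x₂ = 0
  · exact .inr <| .inr ⟨by linear_combination hs₀, by linear_combination hs₀ - hs⟩
  · have hp := mul_left_cancel₀ hs₀ hsp
    have hroot : (x₃ - x₁) * (x₃ - x₂) = 0 := by linear_combination -x₃ * hs - hp
    rcases mul_eq_zero.mp hroot with h | h
    · exact .inl ⟨by linear_combination h, by linear_combination -hs - h⟩
    · exact .inr <| .inl ⟨by linear_combination h, by linear_combination -hs - h⟩

variable [Fintype F] [DecidableEq F]

lemma add_eq_add_cases_of_mem_hyperbola {a₁ a₂ b₁ b₂ : F × F} (ha₁ : a₁ ∈ hyperbola F)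
    (ha₂ : a₂ ∈ hyperbola F) (hb₁ : b₁ ∈ hyperbola F) (hb₂ : b₂ ∈ hyperbola F)
    (h : a₁ + b₁ = a₂ + b₂) :
    a₂ = a₁ ∧ b₂ = b₁ ∨ a₂ = b₁ ∧ b₂ = a₁ ∨ b₁ = -a₁ ∧ b₂ = -a₂ := by
  simp only [hyperbola, mem_map, mem_univ, true_and] at ha₁ ha₂ hb₁ hb₂
  obtain ⟨u₁, rfl⟩ := ha₁
  obtain ⟨u₂, rfl⟩ := ha₂
  obtain ⟨v₁, rfl⟩ := hb₁
  obtain ⟨v₂, rfl⟩ := hb₂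
  simp only [Prod.ext_iff, Prod.fst_add, Prod.snd_add, Prod.fst_neg, Prod.snd_neg,
    Units.val_inv_eq_inv_val] at h ⊢
  rcases eq_and_eq_or_eq_and_eq_or_eq_neg_and_eq_neg u₁.ne_zero v₁.ne_zero u₂.ne_zero
    v₂.ne_zero h.1 h.2 with ⟨h₁, h₂⟩ | ⟨h₁, h₂⟩ | ⟨h₁, h₂⟩ <;> simp [h₁, h₂]

lemma addEnergy_hyperbola_le : E[hyperbola F] ≤ 3 * #(hyperbola F) ^ 2 := by
  set H := hyperbola F
  have hsub : {x ∈ (H ×ˢ H) ×ˢ H ×ˢ H | x.1.1 + x.2.1 = x.1.2 + x.2.2} ⊆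
      (H ×ˢ H).image (fun p => ((p.1, p.1), (p.2, p.2))) ∪
      (H ×ˢ H).image (fun p => ((p.1, p.2), (p.2, p.1))) ∪
      (H ×ˢ H).image (fun p => ((p.1, p.2), (-p.1, -p.2))) := by
    rintro ⟨⟨a₁, a₂⟩, ⟨b₁, b₂⟩⟩ hx
    simp only [mem_filter, mem_product] at hx
    obtain ⟨⟨⟨ha₁, ha₂⟩, hb₁, hb₂⟩, h⟩ := hx
    simp only [mem_union, mem_image, mem_product]
    rcases add_eq_add_cases_of_mem_hyperbola ha₁ ha₂ hb₁ hb₂ h with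
      ⟨h₁, h₂⟩ | ⟨h₁, h₂⟩ | ⟨h₁, h₂⟩
    · exact .inl <| .inl ⟨(a₁, b₁), ⟨ha₁, hb₁⟩, by rw [h₁, h₂]⟩
    · exact .inl <| .inr ⟨(a₁, b₁), ⟨ha₁, hb₁⟩, by rw [h₁, h₂]⟩
    · exact .inr ⟨(a₁, a₂), ⟨ha₁, ha₂⟩, by rw [h₁, h₂]⟩
  calc E[H] ≤ _ := card_le_card hsub
    _ ≤ #(H ×ˢ H) + #(H ×ˢ H) + #(H ×ˢ H) :=
        (card_union_le _ _).trans <| add_le_add ((card_union_le _ _).trans <|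
          add_le_add card_image_le card_image_le) card_image_le
    _ = 3 * #H ^ 2 := by rw [card_product]; ring

theorem norm_kloostermanSum_pow_four_le {ψ : AddChar F ℂ} (hψ : ψ.IsPrimitive) (a : F) :
    ‖kloostermanSum ψ 1 a‖ ^ 4 ≤ 3 * Fintype.card F ^ 3 := by
  have hunits : (0 : ℝ) < Fintype.card Fˣ := by exact_mod_cast Fintype.card_pos
  have hunits_le : (Fintype.card Fˣ : ℝ) ≤ Fintype.card F := by
    exact_mod_cast Fintype.card_le_of_injective _ Units.val_injective
  have henergy : (E[hyperbola F] : ℝ) ≤ 3 * Fintype.card Fˣ ^ 2 := by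
    exact_mod_cast card_hyperbola (R := F) ▸ addEnergy_hyperbola_le
  have hmoment : Fintype.card Fˣ * ‖kloostermanSum ψ 1 a‖ ^ 4 ≤
      Fintype.card Fˣ * (3 * Fintype.card F ^ 2 * Fintype.card Fˣ) :=
    calc Fintype.card Fˣ * ‖kloostermanSum ψ 1 a‖ ^ 4
        ≤ Fintype.card F ^ 2 * E[hyperbola F] :=
          (card_units_mul_norm_kloostermanSum_pow_four_le ψ a).trans_eq
            (sum_norm_kloostermanSum_pow_four hψ)
      _ ≤ Fintype.card F ^ 2 * (3 * Fintype.card Fˣ ^ 2) := by gcongr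
      _ = Fintype.card Fˣ * (3 * Fintype.card F ^ 2 * Fintype.card Fˣ) := by ring
  calc ‖kloostermanSum ψ 1 a‖ ^ 4 ≤ 3 * Fintype.card F ^ 2 * Fintype.card Fˣ :=
        le_of_mul_le_mul_left hmoment hunits
    _ ≤ 3 * Fintype.card F ^ 2 * Fintype.card F := by gcongr
    _ = 3 * Fintype.card F ^ 3 := by ring

end Field

lemma Kl2_eq_kloostermanSum (q : ℕ) [NeZero q] (a : ZMod q) :
    Kl2 q a = (Real.sqrt q : ℂ)⁻¹ * kloostermanSum ZMod.stdAddChar 1 a := by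
  rw [Kl2, kloostermanSum, ← sum_filter]
  congr 1
  refine sum_bij' (fun x hx => ZMod.unitOfCoprime x (mem_filter.1 hx).2)
    (fun u _ => (u : ZMod q).val) (fun _ _ => mem_univ _)
    (fun u _ => mem_filter.2 ⟨mem_range.2 (ZMod.val_lt _), ZMod.val_coe_unit_coprime u⟩)
    (fun x hx => ?_) (fun u _ => Units.ext ?_) (fun x hx => ?_)
  · exact ZMod.val_cast_of_lt (mem_range.1 (mem_filter.1 hx).1)
  · simp [ZMod.coe_unitOfCoprime, ZMod.natCast_val, ZMod.cast_id]
  · rw [ZMod.stdAddChar_apply, ZMod.toCircle_apply, ZMod.coe_unitOfCoprime, ← ZMod.inv_coe_unit,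
      ZMod.coe_unitOfCoprime, one_mul, mul_div_assoc]

/-- Kloosterman's bound: for a prime `q` and `a ∈ (ℤ/qℤ)ˣ`, `|Kl₂(a;q)| ≤ 2 q^{1/4}`. -/
theorem stmt_2 (q : ℕ) (hq : q.Prime) (a : (ZMod q)ˣ) :
    ‖Kl2 q (a : ZMod q)‖ ≤ 2 * (q : ℝ) ^ ((1 : ℝ) / 4) := by
  have : Fact q.Prime := ⟨hq⟩
  have hq₀ : (0 : ℝ) < q := by exact_mod_cast hq.pos
  have hK := norm_kloostermanSum_pow_four_le (ZMod.isPrimitive_stdAddChar q) (a : ZMod q)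
  rw [ZMod.card] at hK
  refine le_of_pow_le_pow_left₀ four_ne_zero (by positivity) ?_
  have hsqrt : Real.sqrt q ^ 4 = (q : ℝ) ^ 2 := by
    rw [show 4 = 2 * 2 from rfl, pow_mul, Real.sq_sqrt hq₀.le]
  calc ‖Kl2 q a‖ ^ 4 = ‖kloostermanSum ZMod.stdAddChar 1 (a : ZMod q)‖ ^ 4 / (q : ℝ) ^ 2 := by
        rw [Kl2_eq_kloostermanSum, norm_mul, norm_inv, Complex.norm_real,
          Real.norm_of_nonneg (Real.sqrt_nonneg _), inv_mul_eq_div, div_pow, hsqrt]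
    _ ≤ 3 * (q : ℝ) ^ 3 / (q : ℝ) ^ 2 := by gcongr
    _ = 3 * q := by field_simp
    _ ≤ 16 * q := by linarith
    _ = (2 * (q : ℝ) ^ ((1 : ℝ) / 4)) ^ 4 := by
        rw [mul_pow, ← Real.rpow_natCast (_ ^ _) 4, ← Real.rpow_mul hq₀.le]
        norm_num
end

section
/- There is an absolute constant C such that for every prime q, every nontrivial Dirichlet character χ modulo q, every integer M, and every integer N with 1 ≤ N ≤ q, one has |∑_{M < n ≤ M+N} χ(n)| ≤ C q^{1/2} log q. -/
/-!
Complete the interval sum with a Gauss sum. For primitive `χ⁻¹` one has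
`τ(χ⁻¹) χ(n) = ∑ₐ χ⁻¹(a) e(an/q)`, so `τ(χ⁻¹) · ∑ₙ χ(n) = ∑ₐ χ⁻¹(a) ∑ₙ e(an/q)`. Each inner sum
is geometric, of size at most `1 / sin(π a/q) ≤ q/(2a) + q/(2(q-a))`, so summing over `a` gives
`q · H_{q-1} ≤ q (1 + log q)`, while `|τ(χ⁻¹)| = √q`.
-/

open Finset Real

theorem norm_geom_sum_le_of_norm_le_one {K : Type*} [NormedDivisionRing K] {z : K}
    (hz : ‖z‖ ≤ 1) (hz₁ : z ≠ 1) (N : ℕ) :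
    ‖∑ j ∈ range N, z ^ j‖ ≤ 2 / ‖z - 1‖ := by
  rw [geom_sum_eq hz₁, norm_div]
  gcongr
  calc ‖z ^ N - 1‖ ≤ ‖z ^ N‖ + ‖(1 : K)‖ := norm_sub_le _ _
    _ ≤ 1 + 1 := by
      gcongr
      · rw [norm_pow]; exact pow_le_one₀ (norm_nonneg z) hz
      · rw [norm_one]
    _ = 2 := by norm_num

theorem Finset.sum_Ioc_int_eq_sum_range {β : Type*} [AddCommMonoid β] (M : ℤ) (N : ℕ)
    (f : ℤ → β) : ∑ n ∈ Ioc M (M + N), f n = ∑ j ∈ range N, f (M + 1 + j) := by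
  refine sum_nbij' (fun n => (n - (M + 1)).toNat) (fun j => M + 1 + j) ?_ ?_ ?_ ?_ ?_ <;>
    intro n hn <;> simp only [mem_Ioc, mem_range] at hn ⊢
  all_goals first | omega | (congr 1; omega)

theorem Real.inv_sin_pi_mul_le {x : ℝ} (hx₀ : 0 < x) (hx₁ : x < 1) :
    (sin (π * x))⁻¹ ≤ (2 * x)⁻¹ + (2 * (1 - x))⁻¹ := by
  have jordan : ∀ y : ℝ, 0 < y → y ≤ 1 / 2 → 2 * y ≤ sin (π * y) := fun y hy₀ hy₁ =>
    calc 2 * y = 2 / π * (π * y) := by field_simp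
      _ ≤ sin (π * y) := mul_le_sin (by positivity) (by nlinarith [pi_pos])
  rcases le_total x (1 / 2) with hx | hx
  · have := inv_anti₀ (by positivity) (jordan x hx₀ hx)
    have : 0 < (2 * (1 - x))⁻¹ := by simp only [inv_pos]; linarith
    linarith
  · have hsym : sin (π * x) = sin (π * (1 - x)) := by rw [mul_one_sub, sin_pi_sub]
    have := inv_anti₀ (by linarith) (jordan (1 - x) (by linarith) (by linarith))
    have : 0 < (2 * x)⁻¹ := by positivity
    rw [hsym]; linarith

namespace ZMod

variable {q : ℕ} [NeZero q]

theorem norm_stdAddChar_sub_one (a : ZMod q) :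
    ‖stdAddChar a - 1‖ = 2 * sin (π * (a.val / q)) := by
  have hq : (0 : ℝ) < q := by exact_mod_cast Nat.pos_of_neZero q
  have hexp : stdAddChar a = Complex.exp (Complex.I * ((2 * π * (a.val / q) : ℝ) : ℂ)) := by
    conv_lhs => rw [← natCast_zmod_val a, ← Int.cast_natCast, stdAddChar_coe]
    push_cast
    ring_nf
  have hsin : 0 ≤ sin (π * (a.val / q)) := by
    refine sin_nonneg_of_nonneg_of_le_pi (by positivity) ?_
    have : (a.val : ℝ) / q ≤ 1 := by
      rw [div_le_one hq]; exact_mod_cast (val_lt a).le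
    nlinarith [pi_pos]
  rw [hexp, Complex.norm_exp_I_mul_ofReal_sub_one, mul_div_right_comm,
    mul_div_cancel_left₀ _ two_ne_zero, norm_mul, Real.norm_of_nonneg hsin, Real.norm_two]

theorem norm_sum_Ioc_stdAddChar_mul_le {a : ZMod q} (ha : a ≠ 0) (M : ℤ) (N : ℕ) :
    ‖∑ n ∈ Ioc M (M + N), stdAddChar ((n : ZMod q) * a)‖ ≤ 2 / ‖stdAddChar a - 1‖ := by
  have hgeom : ∑ n ∈ Ioc M (M + N), stdAddChar ((n : ZMod q) * a) =
      stdAddChar (((M + 1 : ℤ) : ZMod q) * a) * ∑ j ∈ range N, stdAddChar a ^ j := by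
    rw [sum_Ioc_int_eq_sum_range, mul_sum]
    refine sum_congr rfl fun j _ => ?_
    rw [← AddChar.map_nsmul_eq_pow, ← AddChar.map_add_eq_mul, nsmul_eq_mul]
    push_cast
    ring_nf
  have hnorm : ∀ b : ZMod q, ‖(stdAddChar b : ℂ)‖ = 1 := fun b => Circle.norm_coe _
  have hne : stdAddChar a ≠ 1 := by
    rwa [← AddChar.map_zero_eq_one (stdAddChar (N := q)), injective_stdAddChar.ne_iff]
  rw [hgeom, norm_mul, hnorm, one_mul]
  exact norm_geom_sum_le_of_norm_le_one (hnorm a).le hne N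

theorem norm_sum_Ioc_stdAddChar_mul_le_inv_val {a : ZMod q} (ha : a ≠ 0) (M : ℤ) (N : ℕ) :
    ‖∑ n ∈ Ioc M (M + N), stdAddChar ((n : ZMod q) * a)‖ ≤
      (q : ℝ) / 2 * (((a.val : ℝ))⁻¹ + (((-a).val : ℝ))⁻¹) := by
  have : NeZero a := ⟨ha⟩
  have hq : (0 : ℝ) < q := by exact_mod_cast Nat.pos_of_neZero q
  have hv₀ : (0 : ℝ) < a.val := by exact_mod_cast (val_pos.mpr ha)
  have hvq : (a.val : ℝ) < q := by exact_mod_cast val_lt a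
  have hx₀ : 0 < (a.val : ℝ) / q := by positivity
  have hx₁ : (a.val : ℝ) / q < 1 := by rwa [div_lt_one hq]
  have hsin : 0 < sin (π * (a.val / q)) :=
    sin_pos_of_pos_of_lt_pi (by positivity) (by nlinarith [pi_pos])
  have hneg : ((-a).val : ℝ) = q - a.val := by
    rw [val_neg_of_ne_zero, Nat.cast_sub (val_lt a).le]
  calc _ ≤ 2 / ‖stdAddChar a - 1‖ := norm_sum_Ioc_stdAddChar_mul_le ha M N
    _ = (sin (π * (a.val / q)))⁻¹ := by
      rw [norm_stdAddChar_sub_one]; field_simp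
    _ ≤ (2 * ((a.val : ℝ) / q))⁻¹ + (2 * (1 - (a.val : ℝ) / q))⁻¹ := inv_sin_pi_mul_le hx₀ hx₁
    _ = _ := by
      rw [hneg]
      have : (q : ℝ) - a.val ≠ 0 := by linarith
      field_simp

theorem sum_inv_val_eq_harmonic :
    ∑ a : ZMod q, ((a.val : ℝ))⁻¹ = harmonic (q - 1) := by
  obtain ⟨n, rfl⟩ := Nat.exists_eq_succ_of_ne_zero (NeZero.ne q)
  rw [show ∑ a : ZMod (n + 1), ((a.val : ℝ))⁻¹ = ∑ i ∈ range (n + 1), ((i : ℝ))⁻¹ from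
    Fin.sum_univ_eq_sum_range (fun i => ((i : ℝ))⁻¹) (n + 1), sum_range_succ', harmonic]
  simp

theorem sum_inv_val_add_inv_val_neg :
    ∑ a : ZMod q, (((a.val : ℝ))⁻¹ + (((-a).val : ℝ))⁻¹) = 2 * harmonic (q - 1) := by
  rw [sum_add_distrib, Fintype.sum_equiv (Equiv.neg (ZMod q)) (fun a => (((-a).val : ℝ))⁻¹)
    (fun a => ((a.val : ℝ))⁻¹) fun _ => rfl, sum_inv_val_eq_harmonic, two_mul]

end ZMod

theorem norm_gaussSum_eq_sqrt_card {F : Type*} [Field F] [Fintype F] {χ : MulChar F ℂ}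
    (hχ : χ ≠ 1) {ψ : AddChar F ℂ} (hψ : ψ.IsPrimitive) :
    ‖gaussSum χ ψ‖ = √(Fintype.card F) := by
  have h : ((‖gaussSum χ ψ‖ ^ 2 : ℝ) : ℂ) = Fintype.card F := by
    rw [Complex.ofReal_pow, ← Complex.mul_conj', starRingEnd_apply, star_gaussSum_eq,
      gaussSum_mul_gaussSum_eq_card hχ hψ]
  rw [← Real.sqrt_sq (norm_nonneg _), show ‖gaussSum χ ψ‖ ^ 2 = Fintype.card F by exact_mod_cast h]

namespace DirichletCharacter

theorem isPrimitive_of_ne_one {R : Type*} [CommMonoidWithZero R] {p : ℕ} (hp : p.Prime)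
    {χ : DirichletCharacter R p} (hχ : χ ≠ 1) : χ.IsPrimitive := by
  have : NeZero p := ⟨hp.ne_zero⟩
  refine (hp.eq_one_or_self_of_dvd _ χ.conductor_dvd_level).resolve_left fun h => hχ ?_
  exact eq_one_iff_conductor_eq_one.mpr h

theorem gaussSum_mul_sum_inv_eq {R : Type*} [CommRing R] [IsDomain R] {N : ℕ} [NeZero N]
    {χ : DirichletCharacter R N} (hχ : χ.IsPrimitive) (e : AddChar (ZMod N) R) (s : Finset ℤ) :
    gaussSum χ e * ∑ n ∈ s, χ⁻¹ (n : ZMod N) = ∑ a, χ a * ∑ n ∈ s, e (n * a) := by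
  calc gaussSum χ e * ∑ n ∈ s, χ⁻¹ (n : ZMod N)
      = ∑ n ∈ s, gaussSum χ (e.mulShift n) := by
        rw [mul_sum]
        exact sum_congr rfl fun n _ => by rw [gaussSum_mulShift_of_isPrimitive e hχ, mul_comm]
    _ = ∑ a, χ a * ∑ n ∈ s, e (n * a) := by
        simp only [gaussSum, AddChar.mulShift_apply, mul_sum]
        exact sum_comm

end DirichletCharacter

theorem DirichletCharacter.norm_sum_Ioc_le_sqrt_mul_one_add_log {q : ℕ} (hq : q.Prime)
    {χ : DirichletCharacter ℂ q} (hχ : χ ≠ 1) (M : ℤ) (N : ℕ) :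
    ‖∑ n ∈ Ioc M (M + N), χ (n : ZMod q)‖ ≤ √q * (1 + log q) := by
  have : Fact q.Prime := ⟨hq⟩
  set S := ∑ n ∈ Ioc M (M + N), χ (n : ZMod q)
  set e : AddChar (ZMod q) ℂ := ZMod.stdAddChar
  have hχ' : χ⁻¹ ≠ 1 := inv_ne_one.mpr hχ
  have hτ : ‖gaussSum χ⁻¹ e‖ = √q := by
    simpa using norm_gaussSum_eq_sqrt_card hχ' (ZMod.isPrimitive_stdAddChar q)
  have hcompletion := gaussSum_mul_sum_inv_eq (isPrimitive_of_ne_one hq hχ') e (Ioc M (M + N))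
  rw [inv_inv] at hcompletion
  have hterm (a : ZMod q) : ‖χ⁻¹ a * ∑ n ∈ Ioc M (M + N), e (n * a)‖ ≤
      (q : ℝ) / 2 * (((a.val : ℝ))⁻¹ + (((-a).val : ℝ))⁻¹) := by
    rcases eq_or_ne a 0 with rfl | ha
    -- both sides vanish at `a = 0`: `χ⁻¹ 0 = 0` and `(0 : ℝ)⁻¹ = 0`
    · simp [MulChar.map_zero]
    calc _ ≤ 1 * ‖∑ n ∈ Ioc M (M + N), e (n * a)‖ := by
          rw [norm_mul]; gcongr; exact norm_le_one _ _
      _ ≤ _ := by rw [one_mul]; exact ZMod.norm_sum_Ioc_stdAddChar_mul_le_inv_val ha M N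
  have hharm : (harmonic (q - 1) : ℝ) ≤ 1 + log q :=
    (harmonic_le_one_add_log _).trans <| by
      gcongr
      exacts [by exact_mod_cast Nat.sub_pos_of_lt hq.one_lt, by exact_mod_cast Nat.sub_le q 1]
  have key : √q * ‖S‖ ≤ √q * (√q * (1 + log q)) :=
    calc √q * ‖S‖ = ‖∑ a, χ⁻¹ a * ∑ n ∈ Ioc M (M + N), e (n * a)‖ := by
          rw [← hcompletion, norm_mul, hτ]
      _ ≤ ∑ a : ZMod q, (q : ℝ) / 2 * (((a.val : ℝ))⁻¹ + (((-a).val : ℝ))⁻¹) :=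
          (norm_sum_le _ _).trans (sum_le_sum fun a _ => hterm a)
      _ = q * harmonic (q - 1) := by
          rw [← mul_sum, ZMod.sum_inv_val_add_inv_val_neg]; ring
      _ ≤ q * (1 + log q) := by gcongr
      _ = √q * (√q * (1 + log q)) := by rw [← mul_assoc, mul_self_sqrt (Nat.cast_nonneg q)]
  exact le_of_mul_le_mul_left key (sqrt_pos.mpr (by exact_mod_cast hq.pos))

/-- The Pólya–Vinogradov inequality: there is an absolute constant `C` such that for
every prime `q`, every nontrivial Dirichlet character `χ` mod `q`, every integer `M`
and every `1 ≤ N ≤ q`, `|∑_{M < n ≤ M+N} χ(n)| ≤ C √q log q`. -/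
theorem stmt_4 :
    ∃ C : ℝ, ∀ q : ℕ, q.Prime → ∀ χ : DirichletCharacter ℂ q, χ ≠ 1 →
      ∀ M : ℤ, ∀ N : ℕ, 1 ≤ N → N ≤ q →
        ‖∑ n ∈ Finset.Ioc M (M + (N : ℤ)), χ (n : ZMod q)‖ ≤
          C * Real.sqrt q * Real.log q := by
  -- `1 + log q ≤ 3 log q` needs only `log q ≥ 1 / 2`, true already for `q = 2`
  refine ⟨3, fun q hq χ hχ M N _ _ => ?_⟩
  have hlog : 1 / 2 ≤ log q :=
    calc 1 / 2 ≤ log 2 := by linarith [log_two_gt_d9]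
      _ ≤ log q := log_le_log two_pos (by exact_mod_cast hq.two_le)
  calc _ ≤ √q * (1 + log q) := χ.norm_sum_Ioc_le_sqrt_mul_one_add_log hq hχ M N
    _ ≤ 3 * √q * log q := by nlinarith [sqrt_nonneg q]
end

section
/- Let V : ℝ → ℂ be a smooth compactly supported function. There exists a constant Catalog = C(V) depending only on V such that for every prime q, every function K : ℤ/qℤ → ℂ, and every real number N with 1 ≤ N ≤ q, one has |∑_{n ∈ ℤ} K(n mod q) V(n/N)| ≤ C q^{1/2} · max_{y ∈ ℤ/qℤ} |K̂(y)|, where K̂(y) = q^{-1/2} ∑_{x ∈ ℤ/qℤ} K(x) e(xy/q). -/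
/-!
Fourier inversion on `ℤ/qℤ` turns the sum into `q⁻¹ ∑_y 𝓕K(y) W(y)` with
`W(y) = ∑_n V(n/N) e(ny/q)`, and `|𝓕K(y)| ≤ √q · max |K̂|`, so it suffices that
`∑_y |W(y)| ≪ q`. Trivially `|W(y)| ≪ N`. Summing by parts twice,
`|1 - e(y/q)|² |W(y)| ≪ 1/N`, because the second differences of `n ↦ V(n/N)` are `O(N⁻²)` on a
support of size `O(N)`; and `|1 - e(y/q)| ≥ 4|y|/q` for the representative `|y| ≤ q/2`.
Splitting at `|y| ≈ q/N` gives `∑_y min(N, q²/(N y²)) ≪ q`.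
-/

open Finset ZMod

section SummationByParts

variable {𝕜 : Type*} [NormedField 𝕜] {f : ℤ → 𝕜} {z : 𝕜}

lemma summable_shift_mul_zpow (hz : z ≠ 0) (hf : Summable fun n ↦ f n * z ^ n) :
    Summable fun n ↦ f (n - 1) * z ^ n := by
  have := ((Equiv.subRight (1 : ℤ)).summable_iff.mpr hf).mul_left z
  refine this.congr fun n ↦ ?_
  simp only [Function.comp_apply, Equiv.subRight_apply, zpow_sub_one₀ hz]
  field_simp

lemma one_sub_mul_tsum_zpow (hz : z ≠ 0) (hf : Summable fun n ↦ f n * z ^ n) :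
    (1 - z) * ∑' n, f n * z ^ n = ∑' n, (f n - f (n - 1)) * z ^ n := by
  have hshift : z * ∑' n, f n * z ^ n = ∑' n, f (n - 1) * z ^ n := by
    rw [← tsum_mul_left, ← (Equiv.subRight (1 : ℤ)).tsum_eq]
    congr 1 with n
    simp only [Equiv.subRight_apply, zpow_sub_one₀ hz]
    field_simp
  simp_rw [sub_mul]
  rw [one_mul, hshift, hf.tsum_sub (summable_shift_mul_zpow hz hf)]

lemma one_sub_sq_mul_tsum_zpow (hz : z ≠ 0) (hf : Summable fun n ↦ f n * z ^ n) :
    (1 - z) ^ 2 * ∑' n, f n * z ^ n =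
      ∑' n, ((f n - f (n - 1)) - (f (n - 1) - f (n - 2))) * z ^ n := by
  have hdiff : Summable fun n ↦ (f n - f (n - 1)) * z ^ n := by
    simpa only [sub_mul] using hf.sub (summable_shift_mul_zpow hz hf)
  rw [sq, mul_assoc, one_sub_mul_tsum_zpow hz hf, one_sub_mul_tsum_zpow hz hdiff]
  simp only [sub_sub, show ∀ n : ℤ, n - (1 + 1) = n - 2 from fun n ↦ by ring]

end SummationByParts

section FiniteSupport

variable {E : Type*} [NormedAddCommGroup E] {g : ℤ → E} {T : ℝ}

lemma eq_zero_of_notMem_Icc_floor (hg : ∀ n : ℤ, T < |(n : ℝ)| → g n = 0) {n : ℤ}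
    (hn : n ∉ Icc (-⌊T⌋₊ : ℤ) ⌊T⌋₊) : g n = 0 := by
  refine hg n ?_
  have hlt : (⌊T⌋₊ : ℤ) < |n| := by
    rw [mem_Icc, not_and_or, not_le, not_le] at hn
    rcases hn with hn | hn <;> [linarith [neg_abs_le n]; linarith [le_abs_self n]]
  calc T < ⌊T⌋₊ + 1 := Nat.lt_floor_add_one T
    _ ≤ |(n : ℝ)| := by exact_mod_cast hlt

lemma summable_of_eq_zero_of_lt_abs (hg : ∀ n : ℤ, T < |(n : ℝ)| → g n = 0) : Summable g :=
  summable_of_ne_finset_zero fun _ hn ↦ eq_zero_of_notMem_Icc_floor hg hn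

lemma norm_tsum_le_of_eq_zero_of_lt_abs (hT : 0 ≤ T) (hg : ∀ n : ℤ, T < |(n : ℝ)| → g n = 0)
    {B : ℝ} (hB : ∀ n, ‖g n‖ ≤ B) : ‖∑' n, g n‖ ≤ (2 * T + 1) * B := by
  have hB0 : 0 ≤ B := (norm_nonneg _).trans (hB 0)
  rw [tsum_eq_sum fun _ hn ↦ eq_zero_of_notMem_Icc_floor hg hn]
  calc ‖∑ n ∈ Icc (-⌊T⌋₊ : ℤ) ⌊T⌋₊, g n‖ ≤ #(Icc (-⌊T⌋₊ : ℤ) ⌊T⌋₊) * B :=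
        (norm_sum_le_of_le _ fun n _ ↦ hB n).trans_eq (by rw [sum_const, nsmul_eq_mul])
    _ ≤ (2 * T + 1) * B := by
        gcongr
        have hcard : #(Icc (-⌊T⌋₊ : ℤ) ⌊T⌋₊) = 2 * ⌊T⌋₊ + 1 := by rw [Int.card_Icc]; omega
        rw [hcard]
        push_cast
        linarith [Nat.floor_le hT]

end FiniteSupport

lemma norm_second_diff_le {E : Type*} [NormedAddCommGroup E] [NormedSpace ℝ E] {V : ℝ → E}
    (hV : ContDiff ℝ 2 V) {A : ℝ} (hA : ∀ x, ‖deriv (deriv V) x‖ ≤ A) (x h : ℝ) :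
    ‖(V (x + 2 * h) - V (x + h)) - (V (x + h) - V x)‖ ≤ A * h ^ 2 := by
  have hV1 : Differentiable ℝ V := hV.differentiable (by norm_num)
  have hV2 : Differentiable ℝ (deriv V) :=
    ((contDiff_succ_iff_deriv (n := 1)).mp hV).2.2.differentiable one_ne_zero
  have hlip : ∀ t, ‖deriv V (t + h) - deriv V t‖ ≤ A * |h| := fun t ↦ by
    simpa using Convex.norm_image_sub_le_of_norm_deriv_le (fun x _ ↦ hV2 x) (fun x _ ↦ hA x)
      convex_univ (Set.mem_univ t) (Set.mem_univ (t + h))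
  have hD : ∀ t, HasDerivAt (fun t ↦ V (t + h) - V t) (deriv V (t + h) - deriv V t) t := fun t ↦
    ((hV1 _).hasDerivAt.comp_add_const t h).sub (hV1 t).hasDerivAt
  have := Convex.norm_image_sub_le_of_norm_deriv_le (fun t _ ↦ (hD t).differentiableAt)
    (fun t _ ↦ (hD t).deriv ▸ hlip t) convex_univ (Set.mem_univ x) (Set.mem_univ (x + h))
  simpa [add_assoc, ← two_mul, mul_assoc, ← sq_abs h, sq] using this

section SmoothWeight

variable {V : ℝ → ℂ} {R A N : ℝ}

lemma apply_div_eq_zero_of_mul_lt_abs (hVR : ∀ x, R < |x| → V x = 0) (hN : 0 < N) {x : ℝ}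
    (hx : R * N < |x|) : V (x / N) = 0 :=
  hVR _ <| by rwa [abs_div, abs_of_pos hN, lt_div_iff₀ hN]

lemma norm_tsum_mul_zpow_le (hR : 0 ≤ R) (hVR : ∀ x, R < |x| → V x = 0)
    (hA : ∀ x, ‖V x‖ ≤ A) (hN : 1 ≤ N) {z : ℂ} (hz : ‖z‖ = 1) :
    ‖∑' n : ℤ, V (n / N) * z ^ n‖ ≤ (2 * R + 1) * A * N := by
  have hA0 : 0 ≤ A := (norm_nonneg _).trans (hA 0)
  calc ‖∑' n : ℤ, V (n / N) * z ^ n‖ ≤ (2 * (R * N) + 1) * A :=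
        norm_tsum_le_of_eq_zero_of_lt_abs (by positivity)
          (fun n hn ↦ by rw [apply_div_eq_zero_of_mul_lt_abs hVR (by positivity) hn, zero_mul])
          (fun n ↦ by rw [norm_mul, norm_zpow, hz, one_zpow, mul_one]; exact hA _)
    _ ≤ (2 * R + 1) * A * N := by nlinarith [mul_nonneg hR hA0]

lemma sq_norm_one_sub_mul_norm_tsum_mul_zpow_le (hV : ContDiff ℝ 2 V) (hR : 0 ≤ R)
    (hVR : ∀ x, R < |x| → V x = 0) (hA : ∀ x, ‖deriv (deriv V) x‖ ≤ A) (hN : 1 ≤ N) {z : ℂ}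
    (hz : ‖z‖ = 1) :
    ‖1 - z‖ ^ 2 * ‖∑' n : ℤ, V (n / N) * z ^ n‖ ≤ (2 * R + 5) * A / N := by
  have hN0 : 0 < N := by linarith
  have hA0 : 0 ≤ A := (norm_nonneg _).trans (hA 0)
  set f : ℤ → ℂ := fun n ↦ V (n / N)
  have hf : ∀ n : ℤ, R * N < |(n : ℝ)| → f n = 0 := fun n hn ↦
    apply_div_eq_zero_of_mul_lt_abs hVR hN0 hn
  have hsum : Summable fun n ↦ f n * z ^ n :=
    summable_of_eq_zero_of_lt_abs (T := R * N) fun n hn ↦ by rw [hf n hn, zero_mul]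
  have hsecond : ∀ n : ℤ, ‖(f n - f (n - 1)) - (f (n - 1) - f (n - 2))‖ ≤ A / N ^ 2 := by
    intro n
    have := norm_second_diff_le hV hA ((n - 2 : ℤ) / N) (1 / N)
    have e2 : ((n - 2 : ℤ) : ℝ) / N + 2 * (1 / N) = n / N := by push_cast; ring
    have e1 : ((n - 2 : ℤ) : ℝ) / N + 1 / N = (n - 1 : ℤ) / N := by push_cast; ring
    rwa [e2, e1, div_pow, one_pow, mul_one_div] at this
  have hvanish : ∀ n : ℤ, R * N + 2 < |(n : ℝ)| →
      ((f n - f (n - 1)) - (f (n - 1) - f (n - 2))) * z ^ n = 0 := by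
    intro n hn
    have hk : ∀ k : ℤ, 0 ≤ k → k ≤ 2 → f (n - k) = 0 := fun k hk0 hk2 ↦ hf _ <| by
      have hk : |(k : ℝ)| ≤ 2 := by rw [abs_of_nonneg (by exact_mod_cast hk0)]; exact_mod_cast hk2
      push_cast
      linarith [abs_sub_abs_le_abs_sub (n : ℝ) k]
    have h0 := hk 0 le_rfl (by norm_num)
    rw [sub_zero] at h0
    rw [h0, hk 1 (by norm_num) (by norm_num), hk 2 (by norm_num) le_rfl]
    ring
  have hz0 : z ≠ 0 := norm_ne_zero_iff.mp (hz ▸ one_ne_zero)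
  rw [← norm_pow, ← norm_mul, one_sub_sq_mul_tsum_zpow hz0 hsum]
  calc _ ≤ (2 * (R * N + 2) + 1) * (A / N ^ 2) :=
        norm_tsum_le_of_eq_zero_of_lt_abs (by positivity) hvanish
          (fun n ↦ by rw [norm_mul, norm_zpow, hz, one_zpow, mul_one]; exact hsecond n)
    _ = (2 * R + 5 / N) * A / N := by field_simp; ring
    _ ≤ (2 * R + 5) * A / N := by gcongr; exact div_le_self (by norm_num) hN

end SmoothWeight

lemma sum_range_ite_div_sq_le (M t : ℕ) {c d : ℝ} (hc : 0 ≤ c) (hd : 0 ≤ d) :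
    ∑ m ∈ range M, (if m ≤ t then c else d / m ^ 2) ≤ (t + 1) * c + 2 * d / (t + 1) := by
  rw [sum_ite, sum_const, nsmul_eq_mul]
  gcongr
  · have : {m ∈ range M | m ≤ t} ⊆ range (t + 1) := fun m hm ↦ by
      simp only [mem_filter, mem_range] at hm ⊢; omega
    exact_mod_cast (card_le_card this).trans (card_range _).le
  · have : {m ∈ range M | ¬m ≤ t} ⊆ Ioo t M := fun m hm ↦ by
      simp only [mem_filter, mem_range, mem_Ioo] at hm ⊢; omega
    calc ∑ m ∈ range M with ¬m ≤ t, d / (m : ℝ) ^ 2 ≤ ∑ m ∈ Ioo t M, d / (m : ℝ) ^ 2 :=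
          sum_le_sum_of_subset_of_nonneg this fun _ _ _ ↦ by positivity
      _ = d * ∑ m ∈ Ioo t M, ((m : ℝ) ^ 2)⁻¹ := by rw [mul_sum]; rfl
      _ ≤ d * (2 / (t + 1)) := by gcongr; exact sum_Ioo_inv_sq_le t M
      _ = 2 * d / (t + 1) := by ring

section ZModFourier

variable {q : ℕ} [NeZero q]

lemma two_mul_abs_valMinAbs_le (y : ZMod q) : 2 * |(y.valMinAbs : ℝ)| ≤ q := by
  have h := y.natAbs_valMinAbs_le
  rw [← Int.cast_abs, Int.abs_eq_natAbs, Int.cast_natCast]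
  exact_mod_cast (by omega : 2 * y.valMinAbs.natAbs ≤ q)

lemma four_mul_abs_valMinAbs_div_le_norm_one_sub_stdAddChar (y : ZMod q) :
    4 * |(y.valMinAbs : ℝ)| / q ≤ ‖1 - stdAddChar y‖ := by
  have hq : (0 : ℝ) < q := by exact_mod_cast NeZero.pos q
  set k : ℝ := (y.valMinAbs : ℝ)
  have hexp : stdAddChar y = Complex.exp (Complex.I * ((2 * Real.pi * k / q : ℝ) : ℂ)) := by
    rw [← y.coe_valMinAbs, stdAddChar_coe]
    simp only [k]
    push_cast
    ring_nf
  have hsin : 2 / Real.pi * |Real.pi * k / q| ≤ |Real.sin (Real.pi * k / q)| := by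
    refine Real.mul_abs_le_abs_sin ?_
    rw [abs_div, abs_mul, abs_of_pos Real.pi_pos, abs_of_pos hq, div_le_iff₀ hq]
    nlinarith [two_mul_abs_valMinAbs_le y, Real.pi_pos]
  rw [norm_sub_rev, hexp, Complex.norm_exp_I_mul_ofReal_sub_one, norm_mul, Real.norm_eq_abs,
    Real.norm_eq_abs, abs_two, show 2 * Real.pi * k / q / 2 = Real.pi * k / q by ring]
  rw [abs_div, abs_mul, abs_of_pos Real.pi_pos, abs_of_pos hq] at hsin
  calc 4 * |k| / q = 2 * (2 / Real.pi * (Real.pi * |k| / q)) := by field_simp; ring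
    _ ≤ _ := by gcongr

lemma sum_natAbs_valMinAbs_le {g : ℕ → ℝ} (hg : ∀ m, 0 ≤ g m) :
    ∑ y : ZMod q, g y.valMinAbs.natAbs ≤ 2 * ∑ m ∈ range (q / 2 + 1), g m := by
  rw [sum_comp, mul_sum]
  have hfiber : ∀ m : ℕ, #{y : ZMod q | y.valMinAbs.natAbs = m} ≤ 2 := fun m ↦ by
    refine (card_le_card_of_injOn ZMod.valMinAbs (t := {(m : ℤ), -(m : ℤ)})
      (fun y hy ↦ ?_) ZMod.injective_valMinAbs.injOn).trans card_le_two
    have := (mem_filter.mp (mem_coe.mp hy)).2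
    simp only [coe_insert, coe_singleton, Set.mem_insert_iff, Set.mem_singleton_iff]
    exact Int.natAbs_eq_iff.mp this
  calc ∑ m ∈ univ.image (fun y : ZMod q ↦ y.valMinAbs.natAbs),
        #{y : ZMod q | y.valMinAbs.natAbs = m} • g m
      ≤ ∑ m ∈ univ.image (fun y : ZMod q ↦ y.valMinAbs.natAbs), 2 * g m := by
        refine sum_le_sum fun m _ ↦ ?_
        rw [nsmul_eq_mul]
        exact mul_le_mul_of_nonneg_right (by exact_mod_cast hfiber m) (hg m)
    _ ≤ ∑ m ∈ range (q / 2 + 1), 2 * g m := by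
        refine sum_le_sum_of_subset_of_nonneg (fun m hm ↦ ?_) fun m _ _ ↦ by linarith [hg m]
        obtain ⟨y, -, rfl⟩ := mem_image.mp hm
        exact mem_range.mpr (Nat.lt_succ_of_le y.natAbs_valMinAbs_le)

lemma sum_le_of_le_of_mul_valMinAbs_sq_le {w : ZMod q → ℝ} {N a b : ℝ}
    (ha : 0 ≤ a) (hb : 0 ≤ b) (hN : 0 < N) (hNq : N ≤ q) (hw : ∀ y, w y ≤ a * N)
    (hw' : ∀ y, w y * (y.valMinAbs : ℝ) ^ 2 ≤ b * q ^ 2 / N) :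
    ∑ y, w y ≤ 4 * (a + b) * q := by
  set t := ⌊(q : ℝ) / N⌋₊
  set g : ℕ → ℝ := fun m ↦ if m ≤ t then a * N else b * q ^ 2 / N / m ^ 2
  have hg : ∀ m, 0 ≤ g m := fun m ↦ by simp only [g]; split_ifs <;> positivity
  have hwg : ∀ y : ZMod q, w y ≤ g y.valMinAbs.natAbs := fun y ↦ by
    simp only [g]
    split_ifs with h
    · exact hw y
    · have hpos : (0 : ℝ) < y.valMinAbs.natAbs := by exact_mod_cast (by omega : 0 < _)
      rw [le_div_iff₀ (by positivity), Nat.cast_natAbs, Int.cast_abs, sq_abs]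
      exact hw' y
  have ht : (q : ℝ) / N < t + 1 := Nat.lt_floor_add_one _
  have ht' : (t : ℝ) ≤ q / N := Nat.floor_le (by positivity)
  calc ∑ y, w y ≤ ∑ y : ZMod q, g y.valMinAbs.natAbs := sum_le_sum fun y _ ↦ hwg y
    _ ≤ 2 * ((t + 1) * (a * N) + 2 * (b * q ^ 2 / N) / (t + 1)) :=
        (sum_natAbs_valMinAbs_le hg).trans <| by
          gcongr
          exact sum_range_ite_div_sq_le _ _ (by positivity) (by positivity)
    _ ≤ 2 * (2 * a * q + 2 * b * q) := by
        refine mul_le_mul_of_nonneg_left (add_le_add ?_ ?_) two_pos.le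
        · calc (t + 1) * (a * N) ≤ (q / N + 1) * (a * N) := by gcongr
            _ = a * q + a * N := by field_simp
            _ ≤ 2 * a * q := by nlinarith
        · rw [div_le_iff₀ (by positivity)]
          calc 2 * (b * q ^ 2 / N) = 2 * b * q * (q / N) := by ring
            _ ≤ 2 * b * q * (t + 1) := by gcongr
    _ = 4 * (a + b) * q := by ring

lemma norm_stdAddChar (y : ZMod q) : ‖stdAddChar y‖ = 1 := by
  rw [stdAddChar_apply, Circle.norm_coe]

lemma tsum_mul_eq_inv_mul_sum_dft_mul_tsum (K : ZMod q → ℂ) {f : ℤ → ℂ} (hf : Summable f) :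
    ∑' n : ℤ, K n * f n = (q : ℂ)⁻¹ * ∑ y, 𝓕 K y * ∑' n : ℤ, f n * stdAddChar y ^ n := by
  have hK : ∀ n : ℤ, K n = (q : ℂ)⁻¹ * ∑ y, 𝓕 K y * stdAddChar y ^ n := fun n ↦ by
    conv_lhs => rw [← dft.symm_apply_apply K, invDFT_apply, smul_eq_mul]
    congr 1
    refine sum_congr rfl fun y _ ↦ ?_
    rw [smul_eq_mul, ← AddChar.map_zsmul_eq_zpow, zsmul_eq_mul, mul_comm (n : ZMod q)]
    exact mul_comm _ _
  have hsum (y : ZMod q) : Summable fun n : ℤ ↦ 𝓕 K y * (f n * stdAddChar y ^ n) := by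
    refine Summable.mul_left _ (Summable.of_norm_bounded (summable_norm_iff.mpr hf) fun n ↦ ?_)
    rw [norm_mul, norm_zpow, norm_stdAddChar, one_zpow, mul_one]
  calc ∑' n : ℤ, K n * f n
      = ∑' n : ℤ, (q : ℂ)⁻¹ * ∑ y, 𝓕 K y * (f n * stdAddChar y ^ n) := by
        refine tsum_congr fun n ↦ ?_
        rw [hK n, mul_assoc, sum_mul]
        congr 1
        exact sum_congr rfl fun y _ ↦ by ring
    _ = (q : ℂ)⁻¹ * ∑ y, ∑' n : ℤ, 𝓕 K y * (f n * stdAddChar y ^ n) := by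
        rw [tsum_mul_left, Summable.tsum_finsetSum fun y _ ↦ hsum y]
    _ = (q : ℂ)⁻¹ * ∑ y, 𝓕 K y * ∑' n : ℤ, f n * stdAddChar y ^ n := by
        simp_rw [tsum_mul_left]

lemma sum_range_natCast_eq_sum {M : Type*} [AddCommMonoid M] (g : ZMod q → M) :
    ∑ x ∈ range q, g x = ∑ y, g y :=
  sum_nbij' (fun x ↦ x) ZMod.val (fun _ _ ↦ mem_univ _) (fun y _ ↦ mem_range.mpr y.val_lt)
    (fun _ hx ↦ val_cast_of_lt (mem_range.mp hx)) (fun y _ ↦ natCast_zmod_val y) fun _ _ ↦ rfl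

lemma sum_range_mul_exp_eq_dft_neg (K : ZMod q → ℂ) (y : ZMod q) :
    ∑ x ∈ range q, K x * Complex.exp (2 * (Real.pi : ℂ) * Complex.I *
      ((x : ℂ) * (y.val : ℂ) / (q : ℂ))) = 𝓕 K (-y) := by
  rw [dft_apply, ← sum_range_natCast_eq_sum]
  refine sum_congr rfl fun x _ ↦ ?_
  have hxy : (x : ZMod q) * y = ((x * y.val : ℤ) : ZMod q) := by
    push_cast
    rw [natCast_zmod_val]
  rw [mul_neg, neg_neg, smul_eq_mul, mul_comm, hxy, stdAddChar_coe]
  push_cast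
  ring_nf

lemma norm_dft_le_sqrt_mul_iSup (K : ZMod q → ℂ) (y : ZMod q) :
    ‖𝓕 K y‖ ≤ Real.sqrt q * ⨆ y : ZMod q, ‖((Real.sqrt q : ℂ)⁻¹ *
      ∑ x ∈ Finset.range q, K (x : ZMod q) *
        Complex.exp (2 * (Real.pi : ℂ) * Complex.I * ((x : ℂ) * (y.val : ℂ) / (q : ℂ))))‖ := by
  have hsqrt : 0 < Real.sqrt q := Real.sqrt_pos.mpr (by exact_mod_cast NeZero.pos q)
  rw [← div_le_iff₀' hsqrt]
  refine le_ciSup_of_le (Set.finite_range _).bddAbove (-y) (le_of_eq ?_)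
  rw [sum_range_mul_exp_eq_dft_neg, neg_neg, norm_mul, norm_inv, Complex.norm_real,
    Real.norm_of_nonneg hsqrt.le, div_eq_inv_mul]

lemma sum_norm_tsum_mul_stdAddChar_zpow_le {V : ℝ → ℂ} (hV : ContDiff ℝ 2 V)
    {R A₀ A₂ N : ℝ} (hR : 0 ≤ R) (hVR : ∀ x, R < |x| → V x = 0) (hA₀ : ∀ x, ‖V x‖ ≤ A₀)
    (hA₂ : ∀ x, ‖deriv (deriv V) x‖ ≤ A₂) (hN : 1 ≤ N) (hNq : N ≤ q) :
    ∑ y : ZMod q, ‖∑' n : ℤ, V (n / N) * stdAddChar y ^ n‖ ≤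
      4 * ((2 * R + 1) * A₀ + (2 * R + 5) * A₂ / 16) * q := by
  have hq : (0 : ℝ) < q := by exact_mod_cast NeZero.pos q
  refine sum_le_of_le_of_mul_valMinAbs_sq_le (by have := (norm_nonneg _).trans (hA₀ 0); positivity)
    (by have := (norm_nonneg _).trans (hA₂ 0); positivity) (by linarith) hNq
    (fun y ↦ norm_tsum_mul_zpow_le hR hVR hA₀ hN (norm_stdAddChar y)) fun y ↦ ?_
  have hlow := four_mul_abs_valMinAbs_div_le_norm_one_sub_stdAddChar y
  have hW := sq_norm_one_sub_mul_norm_tsum_mul_zpow_le hV hR hVR hA₂ hN (norm_stdAddChar y)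
  calc ‖∑' n : ℤ, V (n / N) * stdAddChar y ^ n‖ * (y.valMinAbs : ℝ) ^ 2
      = q ^ 2 / 16 * ((4 * |(y.valMinAbs : ℝ)| / q) ^ 2 *
          ‖∑' n : ℤ, V (n / N) * stdAddChar y ^ n‖) := by
        rw [div_pow, mul_pow, sq_abs]; field_simp; ring
    _ ≤ q ^ 2 / 16 * ((2 * R + 5) * A₂ / N) := by gcongr; exact hW.trans' (by gcongr)
    _ = (2 * R + 5) * A₂ / 16 * q ^ 2 / N := by ring

end ZModFourier

/-- The smoothed Pólya–Vinogradov bound: for a fixed smooth compactly supported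
`V : ℝ → ℂ` there is a constant `C = C(V)` such that for every prime `q`, every
function `K : ℤ/qℤ → ℂ` and every real `1 ≤ N ≤ q`,
`|∑_{n ∈ ℤ} K(n mod q) V(n/N)| ≤ C √q · max_y |K̂(y)|`, where
`K̂(y) = q^{-1/2} ∑_{x mod q} K(x) e(xy/q)` and `e(t) = exp(2πit)`. -/
theorem stmt_6 (V : ℝ → ℂ) (hV : ContDiff ℝ (⊤ : ℕ∞) V) (hVc : HasCompactSupport V) :
    ∃ C : ℝ, ∀ q : ℕ, q.Prime → ∀ K : ZMod q → ℂ, ∀ N : ℝ, 1 ≤ N → N ≤ q →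
      ‖(∑' n : ℤ, K (n : ZMod q) * V ((n : ℝ) / N))‖ ≤
        C * Real.sqrt q *
          ⨆ y : ZMod q, ‖((Real.sqrt q : ℂ)⁻¹ *
            ∑ x ∈ Finset.range q, K (x : ZMod q) *
              Complex.exp (2 * (Real.pi : ℂ) * Complex.I *
                ((x : ℂ) * (y.val : ℂ) / (q : ℂ))))‖ := by
  obtain ⟨R, hR, hVR⟩ : ∃ R : ℝ, 0 < R ∧ ∀ x : ℝ, R ≤ ‖x‖ → V x = 0 := hVc.exists_pos_le_norm
  obtain ⟨A₀, hA₀⟩ := hVc.exists_bound_of_continuous hV.continuous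
  obtain ⟨A₂, hA₂⟩ := hVc.deriv.deriv.exists_bound_of_continuous (hV.iterate_deriv 2).continuous
  have hV2 : ContDiff ℝ 2 V := hV.of_le (WithTop.coe_le_coe.mpr le_top)
  have hVR' : ∀ x, R < |x| → V x = 0 := fun x hx ↦ hVR x hx.le
  refine ⟨4 * ((2 * R + 1) * A₀ + (2 * R + 5) * A₂ / 16), fun q hq K N hN hNq ↦ ?_⟩
  have : NeZero q := ⟨hq.ne_zero⟩
  set S := ⨆ y : ZMod q, ‖((Real.sqrt q : ℂ)⁻¹ *
            ∑ x ∈ Finset.range q, K (x : ZMod q) *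
              Complex.exp (2 * (Real.pi : ℂ) * Complex.I *
                ((x : ℂ) * (y.val : ℂ) / (q : ℂ))))‖
  have hS : 0 ≤ S := Real.iSup_nonneg fun _ ↦ norm_nonneg _
  have hf : Summable fun n : ℤ ↦ V (n / N) := summable_of_eq_zero_of_lt_abs fun n hn ↦
    apply_div_eq_zero_of_mul_lt_abs hVR' (by linarith) hn
  have hq0 : (0 : ℝ) < q := by exact_mod_cast hq.pos
  rw [tsum_mul_eq_inv_mul_sum_dft_mul_tsum K hf, norm_mul, norm_inv, Complex.norm_natCast]
  calc (q : ℝ)⁻¹ * ‖∑ y, 𝓕 K y * ∑' n : ℤ, V (n / N) * stdAddChar y ^ n‖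
      ≤ (q : ℝ)⁻¹ * ∑ y, Real.sqrt q * S * ‖∑' n : ℤ, V (n / N) * stdAddChar y ^ n‖ := by
        gcongr
        refine (norm_sum_le _ _).trans (sum_le_sum fun y _ ↦ ?_)
        rw [norm_mul]
        gcongr
        exact norm_dft_le_sqrt_mul_iSup K y
    _ ≤ (q : ℝ)⁻¹ * (Real.sqrt q * S *
          (4 * ((2 * R + 1) * A₀ + (2 * R + 5) * A₂ / 16) * q)) := by
        rw [← mul_sum]
        gcongr
        exact sum_norm_tsum_mul_stdAddChar_zpow_le hV2 hR.le hVR' hA₀ hA₂ hN hNq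
    _ = _ := by field_simp
end

section
/- (Heath-Brown's identity) For every integer J ≥ 1, every real number Z ≥ 1, and every integer n with 1 ≤ n ≤ Z^J, one has Λ(n) = ∑_{j=1}^{J} (−1)^{j−1} binom(J,j) ∑_{m₁,…,m_j ≤ Z} μ(m₁)⋯μ(m_j) ∑_{n₁,…,n_j ≥ 1, m₁⋯m_j n₁⋯n_j = n} log n₁. -/
/-!
Write `μ_K` for the Möbius function truncated to `[1, K]`, `K = ⌊Z⌋`. Since `μ * ζ = 1`,
the function `1 - μ_K * ζ` vanishes on `[1, Z]`, so `(1 - μ_K * ζ) ^ J` vanishes on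
`[1, Z ^ J]`, and so does its convolution with `Λ`. Hence
`Λ(n) = ((1 - (1 - μ_K * ζ) ^ J) * Λ)(n)` for `n ≤ Z ^ J`.
Expanding by the binomial theorem and using `Λ = log * μ`, `ζ * μ = 1`, the `j`-th term becomes
`(μ_K ^ j * log * ζ ^ (j - 1))(n)`, and a Dirichlet convolution of several functions is a sum over
tuples with the prescribed product.
-/

open Finset

theorem one_sub_one_sub_pow {R A : Type*} [CommRing R] [CommRing A] [Algebra R A] (x : A)
    (J : ℕ) :
    1 - (1 - x) ^ J = ∑ j ∈ range J, ((-1) ^ j * J.choose (j + 1) : R) • x ^ (j + 1) := by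
  rw [sub_eq_neg_add 1 x, add_pow, sum_range_succ', pow_zero, one_pow, one_mul,
    Nat.choose_zero_right, Nat.cast_one, mul_one, sub_add_cancel_right, ← sum_neg_distrib]
  refine sum_congr rfl fun j _ => ?_
  rw [Algebra.smul_def, one_pow, mul_one, map_mul, map_pow, map_neg, map_one, map_natCast,
    neg_pow, pow_succ (-1 : A)]
  ring

namespace ArithmeticFunction

open scoped ArithmeticFunction.Moebius ArithmeticFunction.zeta

variable {R : Type*}

theorem sum_apply [AddCommMonoid R] {ι : Type*} (s : Finset ι) (f : ι → ArithmeticFunction R)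
    (n : ℕ) : (∑ i ∈ s, f i) n = ∑ i ∈ s, f i n :=
  map_sum (⟨⟨fun f : ArithmeticFunction R => f n, rfl⟩, fun _ _ => rfl⟩ :
    ArithmeticFunction R →+ R) f s

theorem prod_apply [CommSemiring R] {k : ℕ} (f : Fin k → ArithmeticFunction R) (n : ℕ) :
    (∏ i, f i) n = ∑ t ∈ Nat.finMulAntidiag k n, ∏ i, f i (t i) := by
  induction k generalizing n with
  | zero =>
    by_cases hn : n = 1
    · subst hn; simp [Nat.finMulAntidiag_one]
    · simp [Nat.finMulAntidiag_zero_left hn, one_apply_ne hn]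
  | succ k ih =>
    rw [Fin.prod_univ_succ, mul_apply]
    simp_rw [ih, mul_sum]
    rw [sum_sigma']
    refine sum_nbij' (fun x => Fin.cons x.1.1 x.2)
      (fun u => ⟨(u 0, ∏ i, Fin.tail u i), Fin.tail u⟩) ?_ ?_ ?_ ?_ ?_
    · rintro ⟨⟨a, b⟩, t⟩ h
      simp only [mem_sigma, Nat.mem_divisorsAntidiagonal, Nat.mem_finMulAntidiag] at h ⊢
      simp only [Fin.prod_univ_succ, Fin.cons_zero, Fin.cons_succ, h.2.1]
      exact h.1
    · intro u h
      simp only [mem_sigma, Nat.mem_divisorsAntidiagonal, Nat.mem_finMulAntidiag] at h ⊢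
      rw [Fin.prod_univ_succ] at h
      exact ⟨h, trivial, right_ne_zero_of_mul (h.1 ▸ h.2)⟩
    · rintro ⟨⟨a, b⟩, t⟩ h
      simp only [mem_sigma, Nat.mem_divisorsAntidiagonal, Nat.mem_finMulAntidiag] at h
      simp [Fin.tail, h.2.1]
    · intro u _
      simp
    · intro x _
      simp [Fin.prod_univ_succ]

theorem prod_apply_eq_sum_filter_piFinset [CommSemiring R] {k n : ℕ} (hn : n ≠ 0)
    (f : Fin k → ArithmeticFunction R) (s : Fin k → Finset ℕ)
    (hs : ∀ i d, d ∣ n → f i d ≠ 0 → d ∈ s i) :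
    (∏ i, f i) n = ∑ t ∈ Fintype.piFinset s with ∏ i, t i = n, ∏ i, f i (t i) := by
  rw [prod_apply]
  refine (sum_subset (fun t ht => ?_) fun t ht hts => ?_).symm
  · rw [mem_filter] at ht
    exact Nat.mem_finMulAntidiag.2 ⟨ht.2, hn⟩
  · obtain ⟨i, hi⟩ : ∃ i, t i ∉ s i := by
      simpa [Nat.prod_eq_of_mem_finMulAntidiag ht] using hts
    exact prod_eq_zero (mem_univ i) (not_not.1 fun h =>
      hi (hs i _ (Nat.dvd_of_mem_finMulAntidiag ht i) h))

theorem prod_mul_apply_eq_sum_filter_piFinset [CommSemiring R] {k n : ℕ} (hn : n ≠ 0)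
    (f : Fin k → ArithmeticFunction R) (g : ArithmeticFunction R) (s : Fin k → Finset ℕ)
    (hs : ∀ i d, d ∣ n → f i d ≠ 0 → d ∈ s i) :
    ((∏ i, f i) * g) n =
      ∑ m ∈ Fintype.piFinset s with ∏ i, m i ∣ n,
        (∏ i, f i (m i)) * g (n / ∏ i, m i) := by
  rw [mul_apply, Nat.sum_divisorsAntidiagonal (fun a b => (∏ i, f i) a * g b)]
  refine Eq.trans (sum_congr rfl fun d hd => ?_) (sum_fiberwise_of_maps_to (t := n.divisors)
    (g := fun m : Fin k → ℕ => ∏ i, m i)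
    (fun m hm => Nat.mem_divisors.2 ⟨(mem_filter.1 hm).2, hn⟩) _)
  have hdn := Nat.dvd_of_mem_divisors hd
  rw [prod_apply_eq_sum_filter_piFinset (Nat.pos_of_mem_divisors hd).ne' f s
    (fun i e he => hs i e (he.trans hdn)), sum_mul, filter_filter]
  refine sum_congr (filter_congr fun m _ => ?_) fun m hm => ?_
  · exact ⟨fun h => ⟨h ▸ hdn, h⟩, And.right⟩
  · rw [(mem_filter.1 hm).2.2]

theorem log_mul_zeta_pow_apply {N e : ℕ} (he : e ≠ 0) (heN : e ≤ N) (j : ℕ) :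
    (log * (ζ : ArithmeticFunction ℝ) ^ j) e =
      ∑ t ∈ Fintype.piFinset (fun _ : Fin (j + 1) => Icc 1 N) with ∏ i, t i = e,
        Real.log (t 0) := by
  have hprod : log * (ζ : ArithmeticFunction ℝ) ^ j =
      ∏ i, (Fin.cons log fun _ => ζ : Fin (j + 1) → ArithmeticFunction ℝ) i := by
    simp [Fin.prod_univ_succ]
  rw [hprod, prod_apply_eq_sum_filter_piFinset he]
  · refine sum_congr rfl fun t ht => ?_
    simp only [mem_filter, Fintype.mem_piFinset, mem_Icc] at ht
    have hpos (i : Fin j) : t i.succ ≠ 0 := by have := (ht.1 i.succ).1; omega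
    simp [Fin.prod_univ_succ, log_apply, hpos]
  · intro i d hd hfd
    have : d ≠ 0 := by rintro rfl; exact hfd map_zero
    simp only [mem_Icc]
    exact ⟨by omega, (Nat.le_of_dvd (by omega) hd).trans heN⟩

theorem sum_filter_mul_prod_eq_log_apply {n P : ℕ} (hn : n ≠ 0) (hP : 0 < P) (j : ℕ) :
    ∑ t ∈ Fintype.piFinset (fun _ : Fin (j + 1) => Icc 1 n) with P * ∏ i, t i = n,
        Real.log (t 0) =
      if P ∣ n then (log * (ζ : ArithmeticFunction ℝ) ^ j) (n / P) else 0 := by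
  split_ifs with hPn
  · obtain ⟨e, rfl⟩ := hPn
    rw [Nat.mul_div_cancel_left e hP, log_mul_zeta_pow_apply (right_ne_zero_of_mul hn)
      (Nat.le_mul_of_pos_left e hP)]
    simp only [Nat.mul_left_cancel_iff hP]
  · exact sum_eq_zero fun t ht => absurd ⟨_, (mem_filter.1 ht).2.symm⟩ hPn

def truncatedMoebius (R : Type*) [AddGroupWithOne R] (K : ℕ) : ArithmeticFunction R :=
  ⟨fun m => if m ≤ K then (μ m : R) else 0, by simp⟩

theorem truncatedMoebius_apply [AddGroupWithOne R] (K m : ℕ) :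
    truncatedMoebius R K m = if m ≤ K then (μ m : R) else 0 :=
  rfl

theorem truncatedMoebius_mul_zeta_apply_of_le [Ring R] {K m : ℕ} (hm : m ≤ K) :
    (truncatedMoebius R K * ζ) m = (1 : ArithmeticFunction R) m := by
  rw [coe_mul_zeta_apply, ← coe_moebius_mul_coe_zeta, coe_mul_zeta_apply]
  refine sum_congr rfl fun d hd => ?_
  rw [truncatedMoebius_apply, if_pos ((Nat.divisor_le hd).trans hm), intCoe_apply]

theorem truncatedMoebius_pow_mul_apply [CommRing R] (K : ℕ) {k n : ℕ} (hn : n ≠ 0)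
    (g : ArithmeticFunction R) :
    (truncatedMoebius R K ^ k * g) n =
      ∑ m ∈ Fintype.piFinset (fun _ : Fin k => Icc 1 K),
        (∏ i, (μ (m i) : R)) * if ∏ i, m i ∣ n then g (n / ∏ i, m i) else 0 := by
  have hs (i : Fin k) (d : ℕ) (_ : d ∣ n) (hd : truncatedMoebius R K d ≠ 0) :
      d ∈ Icc 1 K := by
    have hd0 : d ≠ 0 := by rintro rfl; exact hd map_zero
    rw [truncatedMoebius_apply] at hd
    split_ifs at hd with hdK
    · exact mem_Icc.2 ⟨by omega, hdK⟩
    · exact absurd rfl hd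
  rw [← Fin.prod_const, prod_mul_apply_eq_sum_filter_piFinset hn _ g _ hs, sum_filter]
  refine sum_congr rfl fun m hm => ?_
  rw [mul_ite, mul_zero]
  congr 2
  refine prod_congr rfl fun i _ => ?_
  rw [truncatedMoebius_apply, if_pos (mem_Icc.1 (Fintype.mem_piFinset.1 hm i)).2]

def VanishesUpTo [Zero R] (f : ArithmeticFunction R) (A : ℝ) : Prop :=
  ∀ m : ℕ, (m : ℝ) ≤ A → f m = 0

theorem VanishesUpTo.mul_right [Semiring R] {f : ArithmeticFunction R} {A : ℝ}
    (hf : VanishesUpTo f A) (g : ArithmeticFunction R) : VanishesUpTo (f * g) A := by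
  intro n hn
  rw [mul_apply]
  refine sum_eq_zero fun p hp => ?_
  obtain ⟨rfl, hn0⟩ := Nat.mem_divisorsAntidiagonal.1 hp
  have hp1 : p.1 ≤ p.1 * p.2 :=
    Nat.le_mul_of_pos_right _ (Nat.pos_of_ne_zero (right_ne_zero_of_mul hn0))
  rw [hf p.1 ((Nat.cast_le.2 hp1).trans hn), zero_mul]

theorem VanishesUpTo.mul [Semiring R] {f g : ArithmeticFunction R} {A B : ℝ}
    (hf : VanishesUpTo f A) (hg : VanishesUpTo g B) (hA : 0 ≤ A) (hB : 0 ≤ B) :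
    VanishesUpTo (f * g) (A * B) := by
  intro n hn
  rw [mul_apply]
  refine sum_eq_zero fun p hp => ?_
  obtain ⟨rfl, -⟩ := Nat.mem_divisorsAntidiagonal.1 hp
  by_cases hpA : (p.1 : ℝ) ≤ A
  · rw [hf _ hpA, zero_mul]
  · suffices hpB : (p.2 : ℝ) ≤ B by rw [hg _ hpB, mul_zero]
    by_contra hpB
    push_cast at hn
    exact (mul_lt_mul'' (not_le.1 hpA) (not_le.1 hpB) hA hB).not_ge hn

theorem VanishesUpTo.pow [Semiring R] {f : ArithmeticFunction R} {A : ℝ}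
    (hf : VanishesUpTo f A) (hA : 0 ≤ A) {J : ℕ} (hJ : J ≠ 0) :
    VanishesUpTo (f ^ J) (A ^ J) := by
  induction J with
  | zero => exact absurd rfl hJ
  | succ J ih =>
    rcases eq_or_ne J 0 with rfl | hJ0
    · simpa using hf
    · rw [pow_succ, pow_succ]
      exact (ih hJ0).mul hf (pow_nonneg hA J) hA

theorem vanishesUpTo_one_sub_truncatedMoebius_mul_zeta [Ring R] (Z : ℝ) :
    VanishesUpTo (1 - truncatedMoebius R ⌊Z⌋₊ * (ζ : ArithmeticFunction R)) Z := by
  intro m hm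
  rw [sub_eq_add_neg, add_apply, neg_apply,
    truncatedMoebius_mul_zeta_apply_of_le (Nat.le_floor hm), add_neg_cancel]

theorem mul_zeta_pow_succ_mul_vonMangoldt (f : ArithmeticFunction ℝ) (j : ℕ) :
    (f * ζ) ^ (j + 1) * Λ = f ^ (j + 1) * (log * (ζ : ArithmeticFunction ℝ) ^ j) := by
  rw [← log_mul_moebius_eq_vonMangoldt]
  calc (f * ζ) ^ (j + 1) * (log * μ)
      = f ^ (j + 1) * (log * (ζ : ArithmeticFunction ℝ) ^ j) * (ζ * μ) := by ring
    _ = _ := by rw [coe_zeta_mul_coe_moebius, mul_one]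

end ArithmeticFunction

open ArithmeticFunction

/-- Heath-Brown's identity: for every `J ≥ 1`, `Z ≥ 1` and `1 ≤ n ≤ Z^J`,
`Λ(n) = ∑_{j=1}^{J} (−1)^{j−1} (J choose j) ∑_{m₁,…,m_j ≤ Z} μ(m₁)⋯μ(m_j)
∑_{m₁⋯m_j n₁⋯n_j = n} log n₁` (here the sum over `j` is reindexed by `j = j' + 1`
with `j' ∈ {0, …, J-1}`, and the `nᵢ` range over positive integers, necessarily
at most `n`). -/
theorem stmt_7 (J : ℕ) (hJ : 1 ≤ J) (Z : ℝ) (hZ : 1 ≤ Z) (n : ℕ) (hn : 1 ≤ n)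
    (hnZ : (n : ℝ) ≤ Z ^ J) :
    (ArithmeticFunction.vonMangoldt n : ℝ) =
      ∑ j ∈ Finset.range J,
        (-1 : ℝ) ^ j * (J.choose (j + 1)) *
          ∑ m ∈ Fintype.piFinset (fun _ : Fin (j + 1) => Finset.Icc 1 (Nat.floor Z)),
            (∏ i, ((ArithmeticFunction.moebius (m i) : ℤ) : ℝ)) *
              ∑ t ∈ (Fintype.piFinset (fun _ : Fin (j + 1) => Finset.Icc 1 n)).filter
                  (fun t => (∏ i, m i) * ∏ i, t i = n),
                Real.log (t 0) := by
  set x : ArithmeticFunction ℝ := truncatedMoebius ℝ ⌊Z⌋₊ * zeta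
  have hn0 : n ≠ 0 := by omega
  have htail : ((1 - x) ^ J * vonMangoldt) n = 0 :=
    ((vanishesUpTo_one_sub_truncatedMoebius_mul_zeta Z).pow (by linarith) (by omega)).mul_right
      _ n hnZ
  calc vonMangoldt n
      = ((1 - (1 - x) ^ J) * vonMangoldt + (1 - x) ^ J * vonMangoldt) n := by
        rw [← add_mul, sub_add_cancel, one_mul]
    _ = ∑ j ∈ range J, (-1) ^ j * J.choose (j + 1) *
          (truncatedMoebius ℝ ⌊Z⌋₊ ^ (j + 1) * (log * zeta ^ j)) n := by
        rw [ArithmeticFunction.add_apply, htail, add_zero, one_sub_one_sub_pow (R := ℝ), sum_mul,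
          ArithmeticFunction.sum_apply]
        simp only [smul_mul_assoc, smul_map, smul_eq_mul, x, mul_zeta_pow_succ_mul_vonMangoldt]
    _ = _ := by
        refine sum_congr rfl fun j _ => ?_
        rw [truncatedMoebius_pow_mul_apply _ hn0]
        refine congrArg _ (sum_congr rfl fun m hm => ?_)
        have hm0 : 0 < ∏ i, m i :=
          prod_pos fun i _ => (mem_Icc.1 (Fintype.mem_piFinset.1 hm i)).1
        rw [sum_filter_mul_prod_eq_log_apply hn0 hm0]
end
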